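/- Let r, ρ : ℝ with r > 0, ρ > 0, and let τ, σ ∈ [0,∞) be two time points. Define f(t) = r·t for t < τ and f(t) = r·τ + ρ·(t−τ) for t ≥ τ, and similarly g(t) = r·t for t < σ and g(t) = r·σ + ρ·(t−σ) for t ≥ σ. Then sup over t ≥ 0 of |f(t) − g(t)| ≤ |σ − τ|·(r + ρ). -/

import Mathlib

/-! Both paths have the form `t ↦ r t + (ρ - r) (t - s)₊` with switch time `s`, and the positive
part is 1-Lipschitz, so they differ by at most `|ρ - r| |σ - τ| ≤ (r + ρ) |σ - τ|`. -/

def switchPath (r ρ τ t : ℝ) : ℝ := r * t + (ρ - r) * max (t - τ) 0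

theorem switchPath_eq_ite (r ρ τ t : ℝ) :
    switchPath r ρ τ t = if t < τ then r * t else r * τ + ρ * (t - τ) := by
  unfold switchPath
  split_ifs with h
  · rw [max_eq_right (by linarith)]; ring
  · rw [max_eq_left (by linarith)]; ring

theorem abs_switchPath_sub_switchPath_le (r ρ τ σ t : ℝ) :
    |switchPath r ρ τ t - switchPath r ρ σ t| ≤ |ρ - r| * |σ - τ| := by
  have hdiff : switchPath r ρ τ t - switchPath r ρ σ t
      = (ρ - r) * (max (t - τ) 0 - max (t - σ) 0) := by
    unfold switchPath; ring
  have hramp : |max (t - τ) 0 - max (t - σ) 0| ≤ |σ - τ| := by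
    simpa only [sub_sub_sub_cancel_left] using abs_max_sub_max_le_abs (t - τ) (t - σ) 0
  rw [hdiff, abs_mul]
  exact mul_le_mul_of_nonneg_left hramp (abs_nonneg _)

theorem stmt_0_general (r ρ τ σ : ℝ) (hr : 0 < r) (hρ : 0 < ρ)
    (f g : ℝ → ℝ)
    (hf : ∀ t, f t = if t < τ then r * t else r * τ + ρ * (t - τ))
    (hg : ∀ t, g t = if t < σ then r * t else r * σ + ρ * (t - σ)) :
    ∀ t, 0 ≤ t → |f t - g t| ≤ |σ - τ| * (r + ρ) := by
  intro t _
  have hslope : |ρ - r| ≤ r + ρ := abs_sub_le_iff.mpr ⟨by linarith, by linarith⟩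
  rw [hf, hg, ← switchPath_eq_ite, ← switchPath_eq_ite, mul_comm]
  exact (abs_switchPath_sub_switchPath_le r ρ τ σ t).trans
    (mul_le_mul_of_nonneg_right hslope (abs_nonneg _))

/-- Deterministic single-rate-switch compatible pasting distance bound:
two piecewise-linear paths switching slope from `r` to `ρ` at times `τ` and `σ`
differ uniformly (over `t ≥ 0`) by at most `|σ - τ| * (r + ρ)`. -/
theorem stmt_0 (r ρ τ σ : ℝ) (hr : 0 < r) (hρ : 0 < ρ)
    (hτ : 0 ≤ τ) (hσ : 0 ≤ σ)
    (f g : ℝ → ℝ)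
    (hf : ∀ t, f t = if t < τ then r * t else r * τ + ρ * (t - τ))
    (hg : ∀ t, g t = if t < σ then r * t else r * σ + ρ * (t - σ)) :
    ∀ t, 0 ≤ t → |f t - g t| ≤ |σ - τ| * (r + ρ) :=
  stmt_0_general r ρ τ σ hr hρ f g hf hg
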